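/- Let h = a·r₁ + b·r₂ where r₁ is the rank function of U^{123}_{2,3} and r₂ that of U_{1,4} on N_4, with a, b ≥ 0. Then h is entropic if and only if b > 0 (with any a ≥ 0), or b = 0 and a = log k for some positive integer k. -/

import Mathlib

open Finset

/-- Probability that the discrete random variable `Y` (on finite sample space `Ω`
with pmf `p`) takes the value `s`. -/
noncomputable def pr {Ω : Type} [Fintype Ω] {S : Type} [DecidableEq S]
    (p : Ω → ℝ) (Y : Ω → S) (s : S) : ℝ := ∑ ω, if Y ω = s then p ω else 0

/-- Shannon entropy (base 2) of the discrete random variable `Y`. -/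
noncomputable def ent {Ω : Type} [Fintype Ω] {S : Type} [DecidableEq S]
    (p : Ω → ℝ) (Y : Ω → S) : ℝ :=
  - ∑ s ∈ Finset.univ.image Y, pr p Y s * Real.logb 2 (pr p Y s)

/-- `h : 2^{N_n} → ℝ` is entropic: it is the entropy function of some random
vector `(X_1, …, X_n)` on finite alphabets. -/
def IsEntropic (n : ℕ) (h : Finset (Fin n) → ℝ) : Prop :=
  ∃ (m : Fin n → ℕ) (p : (∀ i, Fin (m i)) → ℝ),
    (∀ x, 0 ≤ p x) ∧ (∑ x, p x) = 1 ∧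
    ∀ A : Finset (Fin n), h A = ent p (fun x (i : A) => x i.1)

/-- Rank function of the matroid U^{B}_{k,|B|} on N₄ = {0,1,2,3}:
A ↦ min(k, |A ∩ B|); elements outside B are loops. -/
noncomputable def rkU (k : ℕ) (B : Finset (Fin 4)) (A : Finset (Fin 4)) : ℝ :=
  min (k : ℝ) ((A ∩ B).card : ℝ)

/-!
If `b = 0`, the variables `X₀, X₁, X₂` each have entropy `a`, every pair has entropy `2a`
(pairwise independence) and so does the triple (any two determine the third). On the support
this gives `P(x) P(y) = P(x, y, z) = P(y) P(z)`, hence `P(X₀ = x) = P(X₂ = z)`; chaining through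
pairs `(x', z)`, which have positive probability by independence, shows that `X₀` is uniform on
its support, so `a = log₂ k`.

Conversely, `(Z₁, Z₂, Z₁ + Z₂, 0)` with `Z₁, Z₂` independent and uniform on `ℤ/k` realises
`log₂ k · r₁`. Entropic functions are closed under sums (independent products) and under mixing
with a constant: if with probability `1 - t` every variable takes a fresh symbol, `h` becomes
`t h + H(t) r₂`. For `b > 0`, take `t = a / log₂ k` with `k` so large that `H(t) < b` and add
`N` independent shared Bernoulli variables of entropy `(b - H(t)) / N` each.
-/

open Real InformationTheory Filter

section Distribution

variable {Ω S T : Type} [Fintype Ω] [DecidableEq S] [DecidableEq T] {p : Ω → ℝ}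

lemma pr_nonneg (hp : ∀ ω, 0 ≤ p ω) (Y : Ω → S) (s : S) : 0 ≤ pr p Y s :=
  Finset.sum_nonneg fun ω _ => by split_ifs <;> simp [hp ω]

lemma pr_congr {Y : Ω → S} {Z : Ω → T} {s : S} {t : T} (h : ∀ ω, Y ω = s ↔ Z ω = t) :
    pr p Y s = pr p Z t := by
  simp only [pr, h]

lemma pr_comp_of_injective {f : S → T} (hf : Function.Injective f) (Y : Ω → S) (s : S) :
    pr p (f ∘ Y) (f s) = pr p Y s :=
  pr_congr fun _ => hf.eq_iff

lemma sum_pr [Fintype S] (Y : Ω → S) : ∑ s, pr p Y s = ∑ ω, p ω := by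
  unfold pr
  rw [Finset.sum_comm]
  simp

lemma ent_eq_sum_negMulLog [Fintype S] (Y : Ω → S) :
    ent p Y = (∑ s, negMulLog (pr p Y s)) / log 2 := by
  have hzero : ∀ s ∉ Finset.univ.image Y, pr p Y s = 0 := fun s hs =>
    Finset.sum_eq_zero fun ω _ => if_neg fun h => hs (Finset.mem_image.2 ⟨ω, Finset.mem_univ _, h⟩)
  rw [ent, ← Finset.sum_subset (Finset.subset_univ _) fun s _ hs => by
      rw [hzero s hs, negMulLog_zero],
    Finset.sum_div, ← Finset.sum_neg_distrib]
  refine Finset.sum_congr rfl fun s _ => ?_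
  rw [negMulLog, ← log_div_log]
  ring

lemma ent_comp_of_injective {f : S → T} (hf : Function.Injective f) (Y : Ω → S) :
    ent p (f ∘ Y) = ent p Y := by
  rw [ent, ent, ← Finset.image_image, Finset.sum_image fun _ _ _ _ h => hf h]
  simp only [pr_comp_of_injective hf]

lemma ent_pr [Fintype S] [Fintype T] (X : Ω → S) (g : S → T) :
    ent (pr p X) g = ent p (g ∘ X) := by
  have h : ∀ t, pr (pr p X) g t = pr p (g ∘ X) t := fun t => by
    simp only [pr, ← Finset.sum_filter, Function.comp]
    rw [Finset.sum_comm' (t' := Finset.univ.filter fun ω => g (X ω) = t) (s' := fun ω => {X ω})]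
    · simp
    · aesop
  simp only [ent_eq_sum_negMulLog, h]

end Distribution

/-- The equality case of Gibbs' inequality. -/
lemma eq_of_sum_mul_log_eq {ι : Type} [Fintype ι] {u v : ι → ℝ} (hu : ∀ i, 0 ≤ u i)
    (hv : ∀ i, 0 ≤ v i) (hsum : ∑ i, u i = ∑ i, v i) (hsupp : ∀ i, v i = 0 → u i = 0)
    (h : ∑ i, u i * log (u i) = ∑ i, u i * log (v i)) : u = v := by
  have hterm : ∀ i, v i * klFun (u i / v i)
      = u i * log (u i) - u i * log (v i) + v i - u i := fun i => by
    rcases eq_or_ne (v i) 0 with hvi | hvi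
    · simp [hvi, hsupp i hvi]
    rcases eq_or_ne (u i) 0 with hui | hui
    · simp [klFun, hui]
    rw [klFun, log_div hui hvi]
    field_simp
  have hzero : ∑ i, v i * klFun (u i / v i) = 0 := by
    simp only [hterm, Finset.sum_sub_distrib, Finset.sum_add_distrib, h, hsum]
    ring
  have hnonneg : ∀ i ∈ Finset.univ, 0 ≤ v i * klFun (u i / v i) := fun i _ =>
    mul_nonneg (hv i) (klFun_nonneg (div_nonneg (hu i) (hv i)))
  funext i
  rcases eq_or_ne (v i) 0 with hvi | hvi
  · rw [hvi, hsupp i hvi]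
  have := (Finset.sum_eq_zero_iff_of_nonneg hnonneg).1 hzero i (Finset.mem_univ i)
  rw [mul_eq_zero, or_iff_right hvi,
    klFun_eq_zero_iff (div_nonneg (hu i) (hv i)), div_eq_one_iff_eq hvi] at this
  exact this

section Pair

variable {Ω α β : Type} [Fintype Ω] [Fintype α] [Fintype β] [DecidableEq α] [DecidableEq β]
  {p : Ω → ℝ} {X : Ω → α} {Y : Ω → β}

omit [Fintype α] in
lemma pr_eq_sum_pr_pair_left (x : α) : pr p X x = ∑ y, pr p (fun ω => (X ω, Y ω)) (x, y) := by
  unfold pr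
  rw [Finset.sum_comm]
  simp [Prod.ext_iff, ite_and]

omit [Fintype β] in
lemma pr_eq_sum_pr_pair_right (y : β) : pr p Y y = ∑ x, pr p (fun ω => (X ω, Y ω)) (x, y) := by
  unfold pr
  rw [Finset.sum_comm]
  simp [Prod.ext_iff, ite_and]

omit [Fintype α] in
lemma pr_pair_le_left (hp : ∀ ω, 0 ≤ p ω) (x : α) (y : β) :
    pr p (fun ω => (X ω, Y ω)) (x, y) ≤ pr p X x := by
  rw [pr_eq_sum_pr_pair_left (X := X) (Y := Y) x]
  exact Finset.single_le_sum (fun y _ => pr_nonneg hp _ (x, y)) (Finset.mem_univ y)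

omit [Fintype β] in
lemma pr_pair_le_right (hp : ∀ ω, 0 ≤ p ω) (x : α) (y : β) :
    pr p (fun ω => (X ω, Y ω)) (x, y) ≤ pr p Y y := by
  rw [pr_eq_sum_pr_pair_right (X := X) (Y := Y) y]
  exact Finset.single_le_sum (fun x _ => pr_nonneg hp _ (x, y)) (Finset.mem_univ x)

omit [Fintype α] in
lemma exists_pr_pair_ne_zero {x : α} (hx : pr p X x ≠ 0) :
    ∃ y, pr p (fun ω => (X ω, Y ω)) (x, y) ≠ 0 := by
  by_contra! h
  rw [pr_eq_sum_pr_pair_left (X := X) (Y := Y) x] at hx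
  exact hx (Finset.sum_eq_zero fun y _ => h y)

lemma sum_negMulLog_pr_left :
    ∑ x, negMulLog (pr p X x)
      = -∑ z : α × β, pr p (fun ω => (X ω, Y ω)) z * log (pr p X z.1) := by
  simp only [negMulLog_eq_neg, Fintype.sum_prod_type, ← Finset.sum_mul,
    ← pr_eq_sum_pr_pair_left, Finset.sum_neg_distrib]

lemma sum_negMulLog_pr_right :
    ∑ y, negMulLog (pr p Y y)
      = -∑ z : α × β, pr p (fun ω => (X ω, Y ω)) z * log (pr p Y z.2) := by
  simp only [negMulLog_eq_neg, Fintype.sum_prod_type_right, ← Finset.sum_mul,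
    ← pr_eq_sum_pr_pair_right, Finset.sum_neg_distrib]

lemma pr_pair_eq_mul_of_ent_pair_eq_add (hp : ∀ ω, 0 ≤ p ω) (hp1 : ∑ ω, p ω = 1)
    (h : ent p (fun ω => (X ω, Y ω)) = ent p X + ent p Y) (x : α) (y : β) :
    pr p (fun ω => (X ω, Y ω)) (x, y) = pr p X x * pr p Y y := by
  have hsupp : ∀ z : α × β, pr p X z.1 * pr p Y z.2 = 0 → pr p (fun ω => (X ω, Y ω)) z = 0 :=
      fun z hz => by
    rcases mul_eq_zero.1 hz with hz | hz
    · exact le_antisymm (hz ▸ pr_pair_le_left hp z.1 z.2) (pr_nonneg hp _ z)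
    · exact le_antisymm (hz ▸ pr_pair_le_right hp z.1 z.2) (pr_nonneg hp _ z)
  refine congrFun (eq_of_sum_mul_log_eq (v := fun z => pr p X z.1 * pr p Y z.2)
    (pr_nonneg hp _) (fun z => mul_nonneg (pr_nonneg hp _ _) (pr_nonneg hp _ _)) ?_ hsupp ?_) (x, y)
  · simp only [sum_pr, Fintype.sum_prod_type, ← Finset.mul_sum, ← Finset.sum_mul, hp1, one_mul]
  · rw [ent_eq_sum_negMulLog, ent_eq_sum_negMulLog, ent_eq_sum_negMulLog, ← add_div,
      div_left_inj' (log_pos one_lt_two).ne', sum_negMulLog_pr_left (X := X) (Y := Y),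
      sum_negMulLog_pr_right (X := X) (Y := Y),
      ← neg_add, ← Finset.sum_add_distrib] at h
    simp only [negMulLog_eq_neg, Finset.sum_neg_distrib, neg_inj] at h
    rw [h]
    refine Finset.sum_congr rfl fun z _ => ?_
    rcases eq_or_ne (pr p (fun ω => (X ω, Y ω)) z) 0 with hz | hz
    · simp [hz]
    have ⟨h1, h2⟩ := mul_ne_zero_iff.1 (mt (hsupp z) hz)
    rw [log_mul h1 h2]
    ring

lemma pr_pair_eq_left_of_ent_pair_eq (hp : ∀ ω, 0 ≤ p ω)
    (h : ent p (fun ω => (X ω, Y ω)) = ent p X) {x : α} {y : β}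
    (hxy : pr p (fun ω => (X ω, Y ω)) (x, y) ≠ 0) :
    pr p (fun ω => (X ω, Y ω)) (x, y) = pr p X x := by
  have hle : ∀ z ∈ Finset.univ, pr p (fun ω => (X ω, Y ω)) z * log (pr p (fun ω => (X ω, Y ω)) z)
      ≤ pr p (fun ω => (X ω, Y ω)) z * log (pr p X z.1) := fun z _ => by
    rcases (pr_nonneg hp (fun ω => (X ω, Y ω)) z).eq_or_lt with hz | hz
    · simp [← hz]
    · exact mul_le_mul_of_nonneg_left (log_le_log hz (pr_pair_le_left hp z.1 z.2)) hz.le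
  rw [ent_eq_sum_negMulLog, ent_eq_sum_negMulLog, div_left_inj' (log_pos one_lt_two).ne',
    sum_negMulLog_pr_left (X := X) (Y := Y)] at h
  simp only [negMulLog_eq_neg, Finset.sum_neg_distrib, neg_inj] at h
  have heq := (Finset.sum_eq_sum_iff_of_le hle).1 h (x, y) (Finset.mem_univ _)
  have hpos := (pr_nonneg hp _ (x, y)).lt_of_ne' hxy
  exact log_injOn_pos hpos ((hpos.trans_le (pr_pair_le_left hp x y)))
    (mul_left_cancel₀ hxy heq)

end Pair

section Triple

variable {Ω α β γ : Type} [Fintype Ω] [Fintype α] [Fintype β] [Fintype γ]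
  [DecidableEq α] [DecidableEq β] [DecidableEq γ] {p : Ω → ℝ} {X : Ω → α} {Y : Ω → β} {Z : Ω → γ}

omit [Fintype α] in
lemma pr_eq_of_pairwise_indep_of_determined
    (hXY : ∀ x y, pr p (fun ω => (X ω, Y ω)) (x, y) = pr p X x * pr p Y y)
    (hYZ : ∀ y z, pr p (fun ω => (Y ω, Z ω)) (y, z) = pr p Y y * pr p Z z)
    (hXZ : ∀ x z, pr p (fun ω => (X ω, Z ω)) (x, z) = pr p X x * pr p Z z)
    (hXY_Z : ∀ x y z, pr p (fun ω => ((X ω, Y ω), Z ω)) ((x, y), z) ≠ 0 →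
      pr p (fun ω => ((X ω, Y ω), Z ω)) ((x, y), z) = pr p (fun ω => (X ω, Y ω)) (x, y))
    (hYZ_X : ∀ x y z, pr p (fun ω => ((Y ω, Z ω), X ω)) ((y, z), x) ≠ 0 →
      pr p (fun ω => ((Y ω, Z ω), X ω)) ((y, z), x) = pr p (fun ω => (Y ω, Z ω)) (y, z))
    {x x' : α} (hx : pr p X x ≠ 0) (hx' : pr p X x' ≠ 0) : pr p X x = pr p X x' := by
  have hYZX : ∀ x y z, pr p (fun ω => ((Y ω, Z ω), X ω)) ((y, z), x)
      = pr p (fun ω => ((X ω, Y ω), Z ω)) ((x, y), z) := fun x y z =>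
    pr_congr fun ω => by simp only [Prod.mk.injEq]; tauto
  have hXZY : ∀ x y z, pr p (fun ω => ((X ω, Z ω), Y ω)) ((x, z), y)
      = pr p (fun ω => ((X ω, Y ω), Z ω)) ((x, y), z) := fun x y z =>
    pr_congr fun ω => by simp only [Prod.mk.injEq]; tauto
  have key : ∀ x y z, pr p (fun ω => ((X ω, Y ω), Z ω)) ((x, y), z) ≠ 0 → pr p X x = pr p Z z := by
    intro x y z h
    have hxy := (hXY_Z x y z h).trans (hXY x y)
    have hyz := (hYZX x y z).symm.trans ((hYZ_X x y z (hYZX x y z ▸ h)).trans (hYZ y z))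
    exact mul_left_cancel₀ (right_ne_zero_of_mul (hxy ▸ h)) (by rw [mul_comm, ← hxy, hyz])
  obtain ⟨y, hy⟩ := exists_pr_pair_ne_zero (Y := Y) hx
  obtain ⟨z, hz⟩ := exists_pr_pair_ne_zero (Y := Z) hy
  have hxz := key x y z hz
  obtain ⟨y', hy'⟩ := exists_pr_pair_ne_zero (X := fun ω => (X ω, Z ω)) (Y := Y) (x := (x', z))
    (by rw [hXZ]; exact mul_ne_zero hx' (hxz ▸ hx))
  rw [hxz, key x' y' z (by rwa [← hXZY])]

omit [Fintype β] [Fintype γ] [DecidableEq β] [DecidableEq γ] in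
lemma exists_ent_eq_logb_of_pr_eq (hp1 : ∑ ω, p ω = 1)
    (h : ∀ x x', pr p X x ≠ 0 → pr p X x' ≠ 0 → pr p X x = pr p X x') :
    ∃ k : ℕ, 0 < k ∧ ent p X = logb 2 k := by
  obtain ⟨x₀, hx₀⟩ : ∃ x₀, pr p X x₀ ≠ 0 := by
    by_contra! h0
    simp [← sum_pr X, h0] at hp1
  set T := Finset.univ.filter fun x => pr p X x ≠ 0
  have hT : ∀ x ∈ T, pr p X x = pr p X x₀ := fun x hx => h x x₀ (Finset.mem_filter.1 hx).2 hx₀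
  have hcard : (#T : ℝ) * pr p X x₀ = 1 := by
    rw [← hp1, ← sum_pr X, ← Finset.sum_filter_ne_zero, Finset.sum_congr rfl hT,
      Finset.sum_const, nsmul_eq_mul]
  have hTpos : 0 < #T := Finset.card_pos.2 ⟨x₀, Finset.mem_filter.2 ⟨Finset.mem_univ _, hx₀⟩⟩
  refine ⟨#T, hTpos, ?_⟩
  have hsupp : ∑ x ∈ T, negMulLog (pr p X x) = ∑ x, negMulLog (pr p X x) :=
    Finset.sum_filter_of_ne fun x _ hx h0 => hx (by rw [h0, negMulLog_zero])
  rw [ent_eq_sum_negMulLog, ← hsupp, Finset.sum_congr rfl fun x hx => by rw [hT x hx],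
    Finset.sum_const, nsmul_eq_mul, eq_inv_of_mul_eq_one_right hcard, negMulLog, log_inv,
    ← log_div_log]
  field_simp [hTpos.ne']

lemma exists_eq_logb_of_ent_eq (hp : ∀ ω, 0 ≤ p ω) (hp1 : ∑ ω, p ω = 1) {a : ℝ}
    (hX : ent p X = a) (hY : ent p Y = a) (hZ : ent p Z = a)
    (hXY : ent p (fun ω => (X ω, Y ω)) = 2 * a) (hYZ : ent p (fun ω => (Y ω, Z ω)) = 2 * a)
    (hXZ : ent p (fun ω => (X ω, Z ω)) = 2 * a)
    (hXYZ : ent p (fun ω => ((X ω, Y ω), Z ω)) = 2 * a) :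
    ∃ k : ℕ, 0 < k ∧ a = logb 2 k := by
  have hYZX : ent p (fun ω => ((Y ω, Z ω), X ω)) = 2 * a := by
    rw [← hXYZ]
    exact ent_comp_of_injective (f := fun w : (α × β) × γ => ((w.1.2, w.2), w.1.1))
      (by rintro ⟨⟨_, _⟩, _⟩ ⟨⟨_, _⟩, _⟩ h; simp_all) (fun ω => ((X ω, Y ω), Z ω))
  obtain ⟨k, hk, hent⟩ := exists_ent_eq_logb_of_pr_eq hp1 fun x x' hx hx' =>
    pr_eq_of_pairwise_indep_of_determined
      (pr_pair_eq_mul_of_ent_pair_eq_add hp hp1 (by rw [hXY, hX, hY]; ring))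
      (pr_pair_eq_mul_of_ent_pair_eq_add hp hp1 (by rw [hYZ, hY, hZ]; ring))
      (pr_pair_eq_mul_of_ent_pair_eq_add hp hp1 (by rw [hXZ, hX, hZ]; ring))
      (fun _ _ _ => pr_pair_eq_left_of_ent_pair_eq hp (by rw [hXYZ, hXY]))
      (fun _ _ _ => pr_pair_eq_left_of_ent_pair_eq hp (by rw [hYZX, hYZ]))
      hx hx'
  exact ⟨k, hk, hX ▸ hent⟩

end Triple

section Restrict

variable {n : ℕ} {m : Fin n → ℕ}

lemma injective_restrict₂_union (A B : Finset (Fin n)) :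
    Function.Injective fun y : (∀ i : (A ∪ B : Finset (Fin n)), Fin (m i)) =>
      (@Finset.restrict₂ _ (fun i => Fin (m i)) A (A ∪ B) Finset.subset_union_left y,
        @Finset.restrict₂ _ (fun i => Fin (m i)) B (A ∪ B) Finset.subset_union_right y) := by
  intro y y' h
  funext ⟨i, hi⟩
  rcases Finset.mem_union.1 hi with hA | hB
  · exact congrFun (Prod.ext_iff.1 h).1 ⟨i, hA⟩
  · exact congrFun (Prod.ext_iff.1 h).2 ⟨i, hB⟩

variable (p : (∀ i, Fin (m i)) → ℝ)

lemma ent_restrict_pair (A B : Finset (Fin n)) :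
    ent p (fun x => (A.restrict x, B.restrict x)) = ent p (A ∪ B).restrict := by
  exact (ent_comp_of_injective (p := p) (injective_restrict₂_union A B) (A ∪ B).restrict :)

lemma ent_restrict_triple (A B C : Finset (Fin n)) :
    ent p (fun x => ((A.restrict x, B.restrict x), C.restrict x)) = ent p (A ∪ B ∪ C).restrict := by
  rw [← ent_restrict_pair]
  exact (ent_comp_of_injective (p := p)
    ((injective_restrict₂_union A B).prodMap (Function.injective_id (α := ∀ i : C, Fin (m i))))
    fun x => ((A ∪ B).restrict x, C.restrict x) :)

end Restrict

lemma exists_logb_eq_of_isEntropic_mul_rkU {a : ℝ}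
    (H : IsEntropic 4 (fun A => a * rkU 2 {0, 1, 2} A)) : ∃ k : ℕ, 0 < k ∧ a = logb 2 k := by
  obtain ⟨m, p, hp, hp1, hent⟩ := H
  have hA : ∀ (A : Finset (Fin 4)) (c : ℕ), #(A ∩ {0, 1, 2}) = c →
      ent p A.restrict = a * min 2 (c : ℝ) := fun A c hc => by
    have := hent A
    dsimp only at this
    rw [rkU, hc] at this
    exact this.symm
  refine exists_eq_logb_of_ent_eq (X := ({0} : Finset (Fin 4)).restrict)
    (Y := ({1} : Finset (Fin 4)).restrict) (Z := ({2} : Finset (Fin 4)).restrict) hp hp1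
    ?_ ?_ ?_ ?_ ?_ ?_ ?_
  · rw [hA _ 1 (by decide)]; norm_num
  · rw [hA _ 1 (by decide)]; norm_num
  · rw [hA _ 1 (by decide)]; norm_num
  · rw [ent_restrict_pair, hA _ 2 (by decide)]; norm_num; ring
  · rw [ent_restrict_pair, hA _ 2 (by decide)]; norm_num; ring
  · rw [ent_restrict_pair, hA _ 2 (by decide)]; norm_num; ring
  · rw [ent_restrict_triple, hA _ 3 (by decide)]; norm_num; ring

section Constructions

variable {Ω S T : Type} [Fintype Ω] [DecidableEq S] [DecidableEq T] {p : Ω → ℝ}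

lemma ent_eq_zero_of_subsingleton [Fintype S] [Subsingleton S] (hp1 : ∑ ω, p ω = 1)
    (Y : Ω → S) : ent p Y = 0 := by
  have h1 : ∀ s, pr p Y s = 1 := fun s => by rw [← hp1, ← sum_pr Y, Fintype.sum_subsingleton _ s]
  simp [ent_eq_sum_negMulLog, h1]

lemma pr_prod {Ω₁ Ω₂ : Type} [Fintype Ω₁] [Fintype Ω₂] (p₁ : Ω₁ → ℝ) (p₂ : Ω₂ → ℝ)
    (Y₁ : Ω₁ → S) (Y₂ : Ω₂ → T) (s : S) (t : T) :
    pr (fun ω : Ω₁ × Ω₂ => p₁ ω.1 * p₂ ω.2) (fun ω => (Y₁ ω.1, Y₂ ω.2)) (s, t)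
      = pr p₁ Y₁ s * pr p₂ Y₂ t := by
  simp only [pr, Fintype.sum_prod_type, Finset.sum_mul_sum, Prod.mk.injEq, ite_zero_mul_ite_zero,
    ite_and]

lemma ent_prod {Ω₁ Ω₂ : Type} [Fintype Ω₁] [Fintype Ω₂] [Fintype S] [Fintype T]
    {p₁ : Ω₁ → ℝ} {p₂ : Ω₂ → ℝ} (hp₁ : ∑ ω, p₁ ω = 1) (hp₂ : ∑ ω, p₂ ω = 1)
    (Y₁ : Ω₁ → S) (Y₂ : Ω₂ → T) :
    ent (fun ω : Ω₁ × Ω₂ => p₁ ω.1 * p₂ ω.2) (fun ω => (Y₁ ω.1, Y₂ ω.2))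
      = ent p₁ Y₁ + ent p₂ Y₂ := by
  rw [ent_eq_sum_negMulLog, ent_eq_sum_negMulLog, ent_eq_sum_negMulLog, ← add_div]
  congr 1
  simp only [Fintype.sum_prod_type, pr_prod, negMulLog_mul, Finset.sum_add_distrib,
    ← Finset.mul_sum, ← Finset.sum_mul, sum_pr, hp₁, hp₂, one_mul]

lemma ent_map_option_mix [Fintype S] (hp1 : ∑ ω, p ω = 1) (t : ℝ) (Y : Ω → S) :
    ent (fun o => o.elim (1 - t) fun ω => t * p ω) (Option.map Y)
      = binEntropy t / log 2 + t * ent p Y := by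
  have hnone : pr (fun o => o.elim (1 - t) fun ω => t * p ω) (Option.map Y) none = 1 - t := by
    simp [pr, Fintype.sum_option]
  have hsome : ∀ s, pr (fun o => o.elim (1 - t) fun ω => t * p ω) (Option.map Y) (some s)
      = t * pr p Y s := fun s => by
    simp [pr, Fintype.sum_option, Finset.mul_sum]
  rw [ent_eq_sum_negMulLog, ent_eq_sum_negMulLog, Fintype.sum_option, hnone]
  simp only [hsome, negMulLog_mul, Finset.sum_add_distrib, ← Finset.sum_mul, ← Finset.mul_sum,
    sum_pr, hp1, binEntropy_eq_negMulLog_add_negMulLog_one_sub]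
  ring

lemma ent_uniform_of_card_fiber (f : Ω → S) {d : ℕ}
    (hd : ∀ ω, #{ω' | f ω' = f ω} = d) :
    ent (fun _ => (Fintype.card Ω : ℝ)⁻¹) f = logb 2 (Fintype.card Ω / d) := by
  have hpr : ∀ s ∈ Finset.univ.image f, pr (fun _ => (Fintype.card Ω : ℝ)⁻¹) f s
      = d / Fintype.card Ω := fun s hs => by
    obtain ⟨ω, -, rfl⟩ := Finset.mem_image.1 hs
    simp [pr, ← Finset.sum_filter, hd ω, div_eq_mul_inv]
  have hcard : Fintype.card Ω = #(Finset.univ.image f) * d := by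
    rw [← Finset.card_univ, Finset.card_eq_sum_card_image f Finset.univ,
      Finset.sum_congr rfl fun s hs => ?_, Finset.sum_const, smul_eq_mul]
    obtain ⟨ω, -, rfl⟩ := Finset.mem_image.1 hs
    exact hd ω
  rw [ent, Finset.sum_congr rfl fun s hs => by rw [hpr s hs], Finset.sum_const, nsmul_eq_mul,
    ← mul_assoc]
  rcases eq_or_ne (Fintype.card Ω : ℝ) 0 with h0 | h0
  · simp [h0]
  · have hone : (#(Finset.univ.image f) : ℝ) * (d / Fintype.card Ω) = 1 := by
      rw [mul_div_assoc', div_eq_one_iff_eq h0, hcard, Nat.cast_mul]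
    rw [hone, one_mul, ← inv_div, logb_inv, neg_neg]

end Constructions

namespace IsEntropic

variable {n : ℕ} {h h₁ h₂ : Finset (Fin n) → ℝ}

lemma of_model {Ω : Type} [Fintype Ω] {w : Ω → ℝ} (hw : ∀ ω, 0 ≤ w ω) (hw1 : ∑ ω, w ω = 1)
    {m : Fin n → ℕ} (X : Ω → ∀ i, Fin (m i)) (hX : ∀ A, h A = ent w fun ω => A.restrict (X ω)) :
    IsEntropic n h :=
  ⟨m, pr w X, pr_nonneg hw X, by rw [sum_pr, hw1], fun A => (hX A).trans (ent_pr X A.restrict).symm⟩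

lemma zero : IsEntropic n 0 :=
  of_model (w := fun _ : Unit => 1) (fun _ => zero_le_one) (by simp) (m := fun _ => 1)
    (fun _ _ => 0) fun _ => (ent_eq_zero_of_subsingleton (by simp) _).symm

lemma add (H₁ : IsEntropic n h₁) (H₂ : IsEntropic n h₂) : IsEntropic n (h₁ + h₂) := by
  obtain ⟨m₁, p₁, hp₁, hp₁1, he₁⟩ := H₁
  obtain ⟨m₂, p₂, hp₂, hp₂1, he₂⟩ := H₂
  refine of_model (w := fun q : (∀ i, Fin (m₁ i)) × (∀ i, Fin (m₂ i)) => p₁ q.1 * p₂ q.2)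
    (fun q => mul_nonneg (hp₁ q.1) (hp₂ q.2))
    (by rw [Fintype.sum_prod_type, ← hp₁1]; simp [← Finset.mul_sum, hp₂1])
    (fun q i => finProdFinEquiv (q.1 i, q.2 i)) fun A => ?_
  have hinj : Function.Injective fun uv : (∀ i : A, Fin (m₁ i)) × (∀ i : A, Fin (m₂ i)) =>
      fun i => finProdFinEquiv (uv.1 i, uv.2 i) := fun uv uv' huv => by
    have := fun i => Prod.ext_iff.1 (finProdFinEquiv.injective (congrFun huv i))
    exact Prod.ext (funext fun i => (this i).1) (funext fun i => (this i).2)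
  rw [Pi.add_apply, he₁, he₂, ← ent_prod hp₁1 hp₂1]
  exact (ent_comp_of_injective (p := fun q : _ × _ => p₁ q.1 * p₂ q.2) hinj
    fun q => (A.restrict q.1, A.restrict q.2) :).symm

lemma nsmul (H : IsEntropic n h) (N : ℕ) : IsEntropic n (N • h) := by
  induction N with
  | zero => simpa using zero
  | succ N ih => rw [succ_nsmul]; exact ih.add H

lemma mix (H : IsEntropic n h) {t : ℝ} (ht0 : 0 ≤ t) (ht1 : t ≤ 1) :
    IsEntropic n fun A => t * h A + if A = ∅ then 0 else binEntropy t / log 2 := by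
  obtain ⟨m, p, hp, hp1, he⟩ := H
  refine of_model (w := fun o : Option (∀ i, Fin (m i)) => o.elim (1 - t) fun x => t * p x)
    (fun o => o.casesOn (sub_nonneg.2 ht1) fun x => mul_nonneg ht0 (hp x))
    (by simp [Fintype.sum_option, ← Finset.mul_sum, hp1])
    (m := fun i => m i + 1) (fun o i => o.elim 0 fun x => (x i).succ) fun A => ?_
  rcases A.eq_empty_or_nonempty with rfl | ⟨i₀, hi₀⟩
  · rw [he, ent_eq_zero_of_subsingleton hp1, ent_eq_zero_of_subsingleton (by
      simp [Fintype.sum_option, ← Finset.mul_sum, hp1])]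
    simp
  have hinj : Function.Injective fun o : Option (∀ i : A, Fin (m i)) =>
      fun i : A => o.elim 0 fun y => (y i).succ := by
    rintro (_ | y) (_ | y') h
    · rfl
    · exact absurd (congrFun h ⟨i₀, hi₀⟩).symm (Fin.succ_ne_zero _)
    · exact absurd (congrFun h ⟨i₀, hi₀⟩) (Fin.succ_ne_zero _)
    · exact congrArg some (funext fun i => Fin.succ_injective _ (congrFun h i))
  have hcomp : (fun o : Option (∀ i, Fin (m i)) => A.restrict fun i => o.elim 0 fun x => (x i).succ)
      = (fun o => fun i : A => o.elim 0 fun y => (y i).succ) ∘ Option.map A.restrict := by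
    funext o
    cases o <;> rfl
  rw [if_neg (Finset.nonempty_iff_ne_empty.1 ⟨i₀, hi₀⟩), hcomp, ent_comp_of_injective hinj,
    ent_map_option_mix hp1, he, add_comm]
  rfl

end IsEntropic

lemma isEntropic_ite_eq_empty {n : ℕ} {c : ℝ} (hc : 0 ≤ c) :
    IsEntropic n fun A => if A = ∅ then 0 else c := by
  obtain ⟨N, hN⟩ := exists_nat_gt c
  have hN0 : (0 : ℝ) < N := hc.trans_lt hN
  obtain ⟨s, hs, hbin⟩ : ∃ s ∈ Set.Icc (0 : ℝ) 2⁻¹, binEntropy s / log 2 = c / N := by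
    refine intermediate_value_Icc (by norm_num) (by fun_prop) ?_
    simp only [binEntropy_zero, zero_div, binEntropy_two_inv, div_self (log_pos one_lt_two).ne']
    exact ⟨div_nonneg hc hN0.le, (div_le_one hN0).2 hN.le⟩
  convert (IsEntropic.zero.mix hs.1 (hs.2.trans (by norm_num))).nsmul N using 1
  funext A
  split_ifs <;> simp [*]
  field_simp

section Block

variable {k : ℕ} [NeZero k]

def blockCoord (k : ℕ) [NeZero k] : Fin 4 → Fin k × Fin k → Fin k :=
  ![Prod.fst, Prod.snd, fun z => z.1 + z.2, fun _ => 0]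

lemma card_filter_blockCoord_eq {i : Fin 4} (hi : i ∈ ({0, 1, 2} : Finset (Fin 4))) (c : Fin k) :
    #{z | blockCoord k i z = c} = k := by
  simp only [Finset.mem_insert, Finset.mem_singleton] at hi
  rw [Finset.card_filter, Fintype.sum_prod_type]
  rcases hi with rfl | rfl | rfl <;> simp [blockCoord, ← eq_sub_iff_add_eq']

lemma eq_of_blockCoord_eq {i j : Fin 4} (hi : i ∈ ({0, 1, 2} : Finset (Fin 4)))
    (hj : j ∈ ({0, 1, 2} : Finset (Fin 4))) (hij : i ≠ j) {z z' : Fin k × Fin k}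
    (hzi : blockCoord k i z' = blockCoord k i z) (hzj : blockCoord k j z' = blockCoord k j z) :
    z' = z := by
  simp only [Finset.mem_insert, Finset.mem_singleton] at hi hj
  rcases hi with rfl | rfl | rfl <;> rcases hj with rfl | rfl | rfl <;>
    simp_all [blockCoord, Prod.ext_iff]

lemma blockCoord_restrict_eq_iff (A : Finset (Fin 4)) (z z' : Fin k × Fin k) :
    (fun i : A => blockCoord k i z') = (fun i : A => blockCoord k i z) ↔
      ∀ i ∈ A ∩ {0, 1, 2}, blockCoord k i z' = blockCoord k i z := by
  refine ⟨fun h i hi => congrFun h ⟨i, (Finset.mem_inter.1 hi).1⟩, fun h => ?_⟩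
  funext ⟨i, hi⟩
  by_cases hi' : i ∈ ({0, 1, 2} : Finset (Fin 4))
  · exact h i (Finset.mem_inter.2 ⟨hi, hi'⟩)
  · obtain rfl : i = 3 := by fin_cases i <;> simp_all
    rfl

lemma ent_blockCoord (A : Finset (Fin 4)) :
    ent (fun _ => (Fintype.card (Fin k × Fin k) : ℝ)⁻¹) (fun z (i : A) => blockCoord k i z)
      = logb 2 k * rkU 2 {0, 1, 2} A := by
  have hk : (k : ℝ) ≠ 0 := NeZero.ne _
  rw [rkU]
  obtain h0 | h1 | h2 : #(A ∩ {0, 1, 2}) = 0 ∨ #(A ∩ {0, 1, 2}) = 1 ∨ 2 ≤ #(A ∩ {0, 1, 2}) := by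
    omega
  · rw [ent_uniform_of_card_fiber (d := k * k), h0]
    · simp [hk]
    · intro z
      simp [blockCoord_restrict_eq_iff, Finset.card_eq_zero.1 h0]
  · obtain ⟨i, hi⟩ := Finset.card_eq_one.1 h1
    rw [ent_uniform_of_card_fiber (d := k), h1]
    · field_simp
      simp
    · intro z
      simp only [blockCoord_restrict_eq_iff, hi, Finset.mem_singleton, forall_eq]
      exact card_filter_blockCoord_eq
        (Finset.mem_of_mem_inter_right (hi ▸ Finset.mem_singleton_self i)) _
  · obtain ⟨i, hi, j, hj, hij⟩ := Finset.one_lt_card.1 h2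
    rw [ent_uniform_of_card_fiber (d := 1), min_eq_left (by exact_mod_cast h2)]
    · simp [logb_mul hk hk]
      ring
    · intro z
      rw [Finset.card_eq_one]
      refine ⟨z, Finset.eq_singleton_iff_unique_mem.2 ⟨by simp, fun z' hz' => ?_⟩⟩
      have hz' := (blockCoord_restrict_eq_iff A z z').1 (Finset.mem_filter.1 hz').2
      exact eq_of_blockCoord_eq (Finset.mem_of_mem_inter_right hi)
        (Finset.mem_of_mem_inter_right hj) hij (hz' i hi) (hz' j hj)

end Block

lemma isEntropic_logb_mul_rkU {k : ℕ} (hk : 0 < k) :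
    IsEntropic 4 fun A => logb 2 k * rkU 2 {0, 1, 2} A := by
  have : NeZero k := ⟨hk.ne'⟩
  exact IsEntropic.of_model (w := fun _ : Fin k × Fin k => (Fintype.card (Fin k × Fin k) : ℝ)⁻¹)
    (fun _ => by positivity) (by simp; field_simp) (m := fun _ => k) (fun z i => blockCoord k i z)
    fun A => (ent_blockCoord A).symm

lemma rkU_one_univ (A : Finset (Fin 4)) : rkU 1 Finset.univ A = if A = ∅ then 0 else 1 := by
  rcases A.eq_empty_or_nonempty with rfl | hA
  · simp [rkU]
  · simp [rkU, hA.ne_empty, Nat.one_le_cast.2 hA.card_pos]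

lemma exists_nat_binEntropy_div_logb_lt {a b : ℝ} (hb : 0 < b) :
    ∃ k : ℕ, 0 < k ∧ a ≤ logb 2 k ∧ 0 < logb 2 k ∧ binEntropy (a / logb 2 k) / log 2 < b := by
  have hL : Tendsto (fun k : ℕ => logb 2 k) atTop atTop :=
    (tendsto_logb_atTop one_lt_two).comp tendsto_natCast_atTop_atTop
  have hH : Tendsto (fun k : ℕ => binEntropy (a / logb 2 k) / log 2) atTop (nhds 0) := by
    have := ((binEntropy_continuous.div_const (log 2)).tendsto 0).comp
      ((tendsto_const_nhds (x := a)).div_atTop hL)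
    rwa [binEntropy_zero, zero_div] at this
  obtain ⟨k, hk, hbin⟩ :=
    ((hL.eventually_ge_atTop (max a 1)).and (hH.eventually_lt_const hb)).exists
  have hlog : 0 < logb 2 k := zero_lt_one.trans_le ((le_max_right a 1).trans hk)
  exact ⟨k, Nat.pos_of_ne_zero fun h => by simp [h] at hlog, (le_max_left a 1).trans hk, hlog, hbin⟩

/-- Theorem 7: for the face (U^{123}_{2,3}, U_{1,4}),
h = a·r₁ + b·r₂ (a, b ≥ 0) is entropic iff b > 0, or b = 0 and a = log₂ k for
some positive integer k. -/
theorem face_U123_23_U14 (a b : ℝ) (ha : 0 ≤ a) (hb : 0 ≤ b) :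
    IsEntropic 4
      (fun A => a * rkU 2 ({0,1,2} : Finset (Fin 4)) A +
                b * rkU 1 (Finset.univ : Finset (Fin 4)) A)
    ↔ (0 < b ∨ (b = 0 ∧ ∃ k : ℕ, 0 < k ∧ a = Real.logb 2 k)) := by
  constructor
  · intro H
    rcases hb.lt_or_eq with hb | rfl
    · exact Or.inl hb
    · exact Or.inr ⟨rfl, exists_logb_eq_of_isEntropic_mul_rkU (by simpa using H)⟩
  · rintro (hb | ⟨rfl, k, hk, rfl⟩)
    · obtain ⟨k, hk, hak, hlog, hbin⟩ := exists_nat_binEntropy_div_logb_lt (a := a) hb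
      have ht : 0 ≤ a / logb 2 k ∧ a / logb 2 k ≤ 1 :=
        ⟨div_nonneg ha hlog.le, (div_le_one hlog).2 hak⟩
      convert ((isEntropic_logb_mul_rkU hk).mix ht.1 ht.2).add
        (isEntropic_ite_eq_empty (sub_nonneg.2 hbin.le)) using 1
      funext A
      rw [Pi.add_apply, rkU_one_univ]
      split_ifs <;> field_simp <;> ring
    · simpa using isEntropic_logb_mul_rkU hk
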